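/- arXiv:1408.0525 — 4 statements merged into one kernel-verified Lean document; each statement's English description precedes it below -/
import Mathlib

section
/- Define A ≺ B for positive real operators A, B on a Hilbert space H to mean A - B = Re(B)^{1/2} X Re(B)^{1/2} for some bounded operator X. Then ≺ is reflexive and transitive (a pre-order) on the set of positive real operators. -/
/-
Reflexivity is witnessed by `X = 0`. For transitivity, write `b = Re B`, `c = Re C` and
`B - C = √c Y √c`. Taking real parts, `b = c + √c (Re Y) √c ≤ (1 + ‖Re Y‖) c`, so
`‖√b x‖² ≤ (1 + ‖Re Y‖) ‖√c x‖²` for all `x`. By Douglas' factorization lemma `√b = W √c`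
for a bounded `W`, hence `√b X √b = √c (W* X W) √c` and
`A - C = (A - B) + (B - C) = √c (W* X W + Y) √c`.
-/

open ContinuousLinearMap

variable {H : Type*} [NormedAddCommGroup H] [InnerProductSpace ℂ H] [CompleteSpace H]

/-- The real part `(T + T*)/2` of a bounded operator. -/
noncomputable def opRe (T : H →L[ℂ] H) : H →L[ℂ] H :=
  (2 : ℂ)⁻¹ • (T + ContinuousLinearMap.adjoint T)

/-- The positive square root of the real part of an operator. -/
noncomputable def sqrtRe (T : H →L[ℂ] H) : H →L[ℂ] H := CFC.sqrt (opRe T)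

/-- The pre-order `A ≺ B` on positive real operators. -/
noncomputable def prec (A B : H →L[ℂ] H) : Prop :=
  ∃ X : H →L[ℂ] H, A - B = sqrtRe B ∘L X ∘L sqrtRe B

theorem ContinuousLinearMap.exists_eq_comp_of_norm_apply_le {𝕜 E F G : Type*} [RCLike 𝕜]
    [NormedAddCommGroup E] [NormedSpace 𝕜 E]
    [NormedAddCommGroup F] [NormedSpace 𝕜 F] [CompleteSpace F]
    [NormedAddCommGroup G] [InnerProductSpace 𝕜 G] [CompleteSpace G]
    (S : E →L[𝕜] F) (T : E →L[𝕜] G) (k : ℝ) (h : ∀ x, ‖S x‖ ≤ k * ‖T x‖) :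
    ∃ W : G →L[𝕜] F, S = W ∘L T := by
  set K := (LinearMap.range (T : E →ₗ[𝕜] G)).topologicalClosure
  set e : E →ₗ[𝕜] K := LinearMap.codRestrict K T fun x ↦
    (LinearMap.range (T : E →ₗ[𝕜] G)).le_topologicalClosure ⟨x, rfl⟩
  have he : DenseRange e := by
    rw [DenseRange, Subtype.dense_iff, ← Set.range_comp]
    exact subset_rfl
  refine ⟨(S : E →ₗ[𝕜] F).extendOfNorm e ∘L K.orthogonalProjectionOnto, ?_⟩
  ext x
  have hproj : K.orthogonalProjectionOnto (T x) = e x :=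
    K.orthogonalProjectionOnto_mem_subspace_eq_self (e x)
  change S x = (S : E →ₗ[𝕜] F).extendOfNorm e (K.orthogonalProjectionOnto (T x))
  rw [hproj]
  exact (LinearMap.extendOfNorm_eq he ⟨k, h⟩ x).symm

theorem ContinuousLinearMap.exists_eq_comp_of_adjoint_comp_le {𝕜 E F G : Type*} [RCLike 𝕜]
    [NormedAddCommGroup E] [InnerProductSpace 𝕜 E] [CompleteSpace E]
    [NormedAddCommGroup F] [InnerProductSpace 𝕜 F] [CompleteSpace F]
    [NormedAddCommGroup G] [InnerProductSpace 𝕜 G] [CompleteSpace G]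
    (S : E →L[𝕜] F) (T : E →L[𝕜] G) (k : ℝ)
    (h : S.adjoint ∘L S ≤ (k : 𝕜) • (T.adjoint ∘L T)) :
    ∃ W : G →L[𝕜] F, S = W ∘L T := by
  refine S.exists_eq_comp_of_norm_apply_le T √k fun x ↦ ?_
  have hx : ‖S x‖ ^ 2 ≤ k * ‖T x‖ ^ 2 := by
    have := ((le_def _ _).1 h).re_inner_nonneg_left x
    rw [apply_norm_sq_eq_inner_adjoint_left, apply_norm_sq_eq_inner_adjoint_left]
    simpa [inner_sub_left, inner_smul_left] using this
  calc ‖S x‖ ≤ √(k * ‖T x‖ ^ 2) := by simpa using Real.abs_le_sqrt hx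
    _ = √k * ‖T x‖ := by rw [Real.sqrt_mul' _ (sq_nonneg _), Real.sqrt_sq (norm_nonneg _)]

lemma isSelfAdjoint_opRe (T : H →L[ℂ] H) : IsSelfAdjoint (opRe T) := by
  simp only [opRe, IsSelfAdjoint, star_smul, star_add, star_eq_adjoint, adjoint_adjoint,
    star_inv₀, star_ofNat, add_comm]

lemma opRe_add (P Q : H →L[ℂ] H) : opRe (P + Q) = opRe P + opRe Q := by
  simp only [opRe, map_add, ← smul_add]
  abel_nf

lemma opRe_conj {Q : H →L[ℂ] H} (hQ : IsSelfAdjoint Q) (P : H →L[ℂ] H) :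
    opRe (Q ∘L P ∘L Q) = Q ∘L opRe P ∘L Q := by
  simp only [opRe, adjoint_comp, hQ.adjoint_eq, comp_add, add_comp, comp_smul, smul_comp,
    comp_assoc]

lemma isSelfAdjoint_sqrtRe (T : H →L[ℂ] H) : IsSelfAdjoint (sqrtRe T) :=
  .of_nonneg (CFC.sqrt_nonneg _)

lemma adjoint_sqrtRe_comp_sqrtRe {T : H →L[ℂ] H} (hT : (opRe T).IsPositive) :
    (sqrtRe T).adjoint ∘L sqrtRe T = opRe T := by
  rw [(isSelfAdjoint_sqrtRe T).adjoint_eq]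
  exact CFC.sqrt_mul_sqrt_self _ ((nonneg_iff_isPositive _).2 hT)

lemma opRe_le_smul_of_sub_eq {B C Y : H →L[ℂ] H} (hC : (opRe C).IsPositive)
    (hY : B - C = sqrtRe C ∘L Y ∘L sqrtRe C) :
    opRe B ≤ ((1 + ‖opRe Y‖ : ℝ) : ℂ) • opRe C := by
  set s := sqrtRe C
  have hB : opRe B = opRe C + s ∘L opRe Y ∘L s := by
    rw [← opRe_conj (isSelfAdjoint_sqrtRe C), ← hY, ← opRe_add, add_sub_cancel]
  have hconj : s ∘L opRe Y ∘L s ≤ ‖opRe Y‖ • opRe C :=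
    calc s ∘L opRe Y ∘L s = star s * opRe Y * s := by
          rw [(isSelfAdjoint_sqrtRe C).star_eq, mul_assoc]; rfl
      _ ≤ ‖opRe Y‖ • (star s * s) :=
          CStarAlgebra.star_left_conjugate_le_norm_smul (isSelfAdjoint_opRe Y)
      _ = ‖opRe Y‖ • opRe C := by rw [star_eq_adjoint, ← adjoint_sqrtRe_comp_sqrtRe hC]; rfl
  rw [hB, Complex.ofReal_add, Complex.ofReal_one, add_smul, one_smul, Complex.coe_smul]
  exact add_le_add le_rfl hconj

lemma prec.exists_sqrtRe_eq_comp_sqrtRe {B C : H →L[ℂ] H} (hB : (opRe B).IsPositive)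
    (hC : (opRe C).IsPositive) (hBC : prec B C) :
    ∃ W : H →L[ℂ] H, sqrtRe B = W ∘L sqrtRe C := by
  obtain ⟨Y, hY⟩ := hBC
  refine (sqrtRe B).exists_eq_comp_of_adjoint_comp_le (sqrtRe C) (1 + ‖opRe Y‖) ?_
  rw [adjoint_sqrtRe_comp_sqrtRe hB, adjoint_sqrtRe_comp_sqrtRe hC]
  exact opRe_le_smul_of_sub_eq hC hY

lemma prec_refl (A : H →L[ℂ] H) : prec A A := ⟨0, by simp⟩

lemma prec_trans {A B C : H →L[ℂ] H} (hB : (opRe B).IsPositive) (hC : (opRe C).IsPositive)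
    (hAB : prec A B) (hBC : prec B C) : prec A C := by
  obtain ⟨W, hW⟩ := hBC.exists_sqrtRe_eq_comp_sqrtRe hB hC
  obtain ⟨X, hX⟩ := hAB
  obtain ⟨Y, hY⟩ := hBC
  have hconj :
      sqrtRe B ∘L X ∘L sqrtRe B = sqrtRe C ∘L (W.adjoint ∘L X ∘L W) ∘L sqrtRe C := by
    nth_rw 1 [← (isSelfAdjoint_sqrtRe B).adjoint_eq]
    rw [hW, adjoint_comp, (isSelfAdjoint_sqrtRe C).adjoint_eq]
    simp only [comp_assoc]
  refine ⟨W.adjoint ∘L X ∘L W + Y, ?_⟩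
  rw [← sub_add_sub_cancel A B C, hX, hY, hconj, add_comp, comp_add]

theorem stmt7 :
    (∀ A : H →L[ℂ] H, (opRe A).IsPositive → prec A A) ∧
    (∀ A B C : H →L[ℂ] H, (opRe A).IsPositive → (opRe B).IsPositive →
      (opRe C).IsPositive → prec A B → prec B C → prec A C) :=
  ⟨fun A _ ↦ prec_refl A, fun _ _ _ _ hB hC ↦ prec_trans hB hC⟩
end

section
/- Let A, B be positive real operators on a Hilbert space H with A ≺ B. Then every vector in the kernel of Re(B) lies in the kernel of Re(A), and on the kernel of Re(B) the operators A and B agree: A h = B h = i·Im(B) h for all h ∈ Ker Re(B). -/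
open ContinuousLinearMap

variable {H : Type*} [NormedAddCommGroup H] [InnerProductSpace ℂ H] [CompleteSpace H]

/-- The imaginary part `(T - T*)/(2i)` of a bounded operator. -/
noncomputable def opIm (T : H →L[ℂ] H) : H →L[ℂ] H :=
  (2 * Complex.I)⁻¹ • (T - ContinuousLinearMap.adjoint T)

/-! The square root `√Re B` is self-adjoint with square `Re B`, so it has the same kernel as
`Re B`. Hence for `h ∈ ker Re B` both `A - B = √Re B X √Re B` and its adjoint `√Re B X* √Re B`
vanish at `h`, which gives `A h = B h` and `Re A h = Re B h + Re (A - B) h = 0`; finally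
`B h = Re B h + i Im B h = i Im B h`. -/

open ComplexStarModule

lemma ker_cfcSqrt {P : H →L[ℂ] H} (hP : P.IsPositive) : (CFC.sqrt P).ker = P.ker := by
  have hS : IsSelfAdjoint (CFC.sqrt P) := (CFC.sqrt_nonneg P).isSelfAdjoint
  have := ker_adjoint_comp_self (CFC.sqrt P)
  rw [← star_eq_adjoint, hS.star_eq, ← mul_def,
    CFC.sqrt_mul_sqrt_self P ((nonneg_iff_isPositive P).2 hP)] at this
  exact this.symm

lemma opRe_eq_realPart (T : H →L[ℂ] H) : opRe T = ℜ T := by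
  rw [opRe, realPart_apply_coe, star_eq_adjoint, ← Complex.coe_smul]
  norm_num

lemma opIm_eq_imaginaryPart (T : H →L[ℂ] H) : opIm T = ℑ T := by
  rw [opIm, imaginaryPart_apply_coe, star_eq_adjoint, ← Complex.coe_smul, smul_smul]
  congr 1
  rw [mul_inv, Complex.inv_I]
  push_cast
  ring

lemma opRe_add_I_smul_opIm (T : H →L[ℂ] H) : opRe T + Complex.I • opIm T = T := by
  rw [opRe_eq_realPart, opIm_eq_imaginaryPart, realPart_add_I_smul_imaginaryPart]

lemma opRe_sub (S T : H →L[ℂ] H) : opRe (S - T) = opRe S - opRe T := by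
  simp only [opRe_eq_realPart, map_sub, AddSubgroupClass.coe_sub]

lemma opRe_comp_comp_apply_eq_zero {S : H →L[ℂ] H} (hS : IsSelfAdjoint S) (X : H →L[ℂ] H)
    {v : H} (hv : S v = 0) : opRe (S ∘L X ∘L S) v = 0 := by
  simp [opRe, adjoint_comp, hS.adjoint_eq, hv]

theorem stmt10_general (A B : H →L[ℂ] H)
    (hB : (opRe B).IsPositive)
    (h : ∃ X : H →L[ℂ] H, A - B = sqrtRe B ∘L X ∘L sqrtRe B) :
    ∀ h : H, opRe B h = 0 →
      opRe A h = 0 ∧ A h = B h ∧ B h = Complex.I • opIm B h := by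
  obtain ⟨X, hX⟩ := h
  intro v hv
  have hS : IsSelfAdjoint (sqrtRe B) := (CFC.sqrt_nonneg _).isSelfAdjoint
  have hSv : sqrtRe B v = 0 := (SetLike.ext_iff.1 (ker_cfcSqrt hB) v).2 hv
  have hAB : A v = B v := by
    rw [← sub_eq_zero, ← sub_apply, hX]
    simp [hSv]
  refine ⟨?_, hAB, ?_⟩
  · calc opRe A v = opRe (A - B) v + opRe B v := by simp [opRe_sub]
      _ = 0 := by rw [hX, opRe_comp_comp_apply_eq_zero hS X hSv, hv, add_zero]
  · simpa [hv] using congr($(opRe_add_I_smul_opIm B) v).symm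

theorem stmt10 (A B : H →L[ℂ] H)
    (hA : (opRe A).IsPositive) (hB : (opRe B).IsPositive)
    (h : ∃ X : H →L[ℂ] H, A - B = sqrtRe B ∘L X ∘L sqrtRe B) :
    ∀ h : H, opRe B h = 0 →
      opRe A h = 0 ∧ A h = B h ∧ B h = Complex.I • opIm B h :=
  stmt10_general A B hB h
end

section
/- Let N₁ : K → K₁ and N₂ : K → K₂ be bounded Hilbert space operators and suppose there exists a bounded operator Z with N₁*N₁ + N₂*N₂ = Re(N₂* Z N₁). Then ‖N₁ x‖² ≤ ‖Z‖·‖N₁ x‖·‖N₂ x‖ and ‖N₂ x‖² ≤ ‖Z‖·‖N₁ x‖·‖N₂ x‖ for all x ∈ K; in particular Ker N₁ = Ker N₂. -/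
open ContinuousLinearMap

variable {H : Type*} [NormedAddCommGroup H] [InnerProductSpace ℂ H] [CompleteSpace H]

/-!
Pairing the hypothesis with `x` gives `‖N₁ x‖² + ‖N₂ x‖² = Re ⟪N₂ x, Z N₁ x⟫ ≤ ‖Z‖ ‖N₁ x‖ ‖N₂ x‖`
by Cauchy–Schwarz. Each square is bounded by the sum, and if one norm vanishes the right-hand
side does, forcing the other to vanish too.
-/

theorem inner_opRe_apply_self (T : H →L[ℂ] H) (x : H) :
    inner ℂ x (opRe T x) = ((inner ℂ x (T x)).re : ℂ) := by
  simp only [opRe, smul_apply, add_apply, inner_smul_right, inner_add_right,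
    adjoint_inner_right]
  rw [← inner_conj_symm (T x) x, Complex.add_conj]
  push_cast
  ring

theorem inner_adjoint_comp_self_add_apply_self {K K₁ K₂ : Type*}
    [NormedAddCommGroup K] [InnerProductSpace ℂ K] [CompleteSpace K]
    [NormedAddCommGroup K₁] [InnerProductSpace ℂ K₁] [CompleteSpace K₁]
    [NormedAddCommGroup K₂] [InnerProductSpace ℂ K₂] [CompleteSpace K₂]
    (N₁ : K →L[ℂ] K₁) (N₂ : K →L[ℂ] K₂) (x : K) :
    inner ℂ x ((adjoint N₁ ∘L N₁ + adjoint N₂ ∘L N₂) x) =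
      ((‖N₁ x‖ ^ 2 + ‖N₂ x‖ ^ 2 : ℝ) : ℂ) := by
  simp only [add_apply, inner_add_right, coe_comp, Function.comp_apply, adjoint_inner_right,
    inner_self_eq_norm_sq_to_K]
  push_cast
  rfl

theorem norm_sq_add_norm_sq_le_of_eq_opRe {K K₁ K₂ : Type*}
    [NormedAddCommGroup K] [InnerProductSpace ℂ K] [CompleteSpace K]
    [NormedAddCommGroup K₁] [InnerProductSpace ℂ K₁] [CompleteSpace K₁]
    [NormedAddCommGroup K₂] [InnerProductSpace ℂ K₂] [CompleteSpace K₂]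
    {N₁ : K →L[ℂ] K₁} {N₂ : K →L[ℂ] K₂} {Z : K₁ →L[ℂ] K₂}
    (h : adjoint N₁ ∘L N₁ + adjoint N₂ ∘L N₂ = opRe (adjoint N₂ ∘L Z ∘L N₁)) (x : K) :
    ‖N₁ x‖ ^ 2 + ‖N₂ x‖ ^ 2 ≤ ‖Z‖ * ‖N₁ x‖ * ‖N₂ x‖ := by
  have hsum : ‖N₁ x‖ ^ 2 + ‖N₂ x‖ ^ 2 = (inner ℂ (N₂ x) (Z (N₁ x))).re := by
    have := inner_adjoint_comp_self_add_apply_self N₁ N₂ x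
    rw [h, inner_opRe_apply_self] at this
    simpa [adjoint_inner_right] using (Complex.ofReal_injective this).symm
  calc ‖N₁ x‖ ^ 2 + ‖N₂ x‖ ^ 2 = (inner ℂ (N₂ x) (Z (N₁ x))).re := hsum
    _ ≤ ‖inner ℂ (N₂ x) (Z (N₁ x))‖ := Complex.re_le_norm _
    _ ≤ ‖N₂ x‖ * ‖Z (N₁ x)‖ := norm_inner_le_norm _ _
    _ ≤ ‖N₂ x‖ * (‖Z‖ * ‖N₁ x‖) := by gcongr; exact Z.le_opNorm _
    _ = ‖Z‖ * ‖N₁ x‖ * ‖N₂ x‖ := by ring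

theorem eq_zero_iff_eq_zero_of_sq_add_sq_le_mul {a b c : ℝ} (h : a ^ 2 + b ^ 2 ≤ c * a * b) :
    a = 0 ↔ b = 0 := by
  constructor
  · rintro rfl
    nlinarith [sq_nonneg b]
  · rintro rfl
    nlinarith [sq_nonneg a]

theorem stmt11 {K K₁ K₂ : Type*}
    [NormedAddCommGroup K] [InnerProductSpace ℂ K] [CompleteSpace K]
    [NormedAddCommGroup K₁] [InnerProductSpace ℂ K₁] [CompleteSpace K₁]
    [NormedAddCommGroup K₂] [InnerProductSpace ℂ K₂] [CompleteSpace K₂]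
    (N₁ : K →L[ℂ] K₁) (N₂ : K →L[ℂ] K₂) (Z : K₁ →L[ℂ] K₂)
    (h : ContinuousLinearMap.adjoint N₁ ∘L N₁ + ContinuousLinearMap.adjoint N₂ ∘L N₂ =
      opRe (ContinuousLinearMap.adjoint N₂ ∘L Z ∘L N₁)) :
    (∀ x : K, ‖N₁ x‖ ^ 2 ≤ ‖Z‖ * ‖N₁ x‖ * ‖N₂ x‖ ∧
      ‖N₂ x‖ ^ 2 ≤ ‖Z‖ * ‖N₁ x‖ * ‖N₂ x‖) ∧
    LinearMap.ker (N₁ : K →ₗ[ℂ] K₁) = LinearMap.ker (N₂ : K →ₗ[ℂ] K₂) := by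
  have key := norm_sq_add_norm_sq_le_of_eq_opRe h
  refine ⟨fun x => ⟨?_, ?_⟩, ?_⟩
  · exact (le_add_of_nonneg_right (sq_nonneg _)).trans (key x)
  · exact (le_add_of_nonneg_left (sq_nonneg _)).trans (key x)
  · ext x
    simp only [LinearMap.mem_ker, coe_coe]
    rw [← norm_eq_zero (a := N₁ x), ← norm_eq_zero (a := N₂ x)]
    exact eq_zero_iff_eq_zero_of_sq_add_sq_le_mul (key x)
end

section
/- Let W be an invertible operator on H ⊕ H with W*JW ≤ J where J = [[0,−I],[−I,0]], let Ĵ = [[I,0],[0,−I]], and set W̃ = Ĵ W^{-1} Ĵ with block entries W̃ᵢⱼ. Then for positive real operators A, B in the domain of T_W (i.e. with W₂₁A+W₂₂ and W₂₁B+W₂₂ invertible), one has T_W[A] − T_W[B] = (W̃₁₁ + A W̃₂₁)^{-1}(A − B)(W₂₂ + W₂₁B)^{-1}. -/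
/-!
Everything happens in the ring of operators. Write `T[X] = (W₁₁X + W₁₂)(W₂₁X + W₂₂)⁻¹`,
`E = V₁₁ - A V₂₁` and `F = A V₂₂ - V₁₂`. The relation `V W = 1` gives, for every `X`,
`E (W₁₁X + W₁₂) = (X - A) + F (W₂₁X + W₂₂)`, hence `E T[X] = (X - A)(W₂₁X + W₂₂)⁻¹ + F`.
Taking `X = A` and `X = B` and subtracting, `E (T[A] - T[B]) = (A - B)(W₂₁B + W₂₂)⁻¹`.
Finally `E` has the two-sided inverse `W₁₁ - T[A] W₂₁`.
-/

open ContinuousLinearMap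

variable {H : Type*} [NormedAddCommGroup H] [InnerProductSpace ℂ H] [CompleteSpace H]

namespace MobiusDifference

variable {R : Type*} [Ring R] {W11 W12 W21 W22 V11 V12 V21 V22 : R}

theorem mul_numerator_eq (A X : R)
    (hVW1 : V11 * W11 + V12 * W21 = 1) (hVW2 : V11 * W12 + V12 * W22 = 0)
    (hVW3 : V21 * W11 + V22 * W21 = 0) (hVW4 : V21 * W12 + V22 * W22 = 1) :
    (V11 - A * V21) * (W11 * X + W12) = (X - A) + (A * V22 - V12) * (W21 * X + W22) := by
  have expand : (V11 - A * V21) * (W11 * X + W12) - (A * V22 - V12) * (W21 * X + W22) =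
      (V11 * W11 + V12 * W21) * X + (V11 * W12 + V12 * W22)
        - A * ((V21 * W11 + V22 * W21) * X) - A * (V21 * W12 + V22 * W22) := by
    noncomm_ring
  rw [hVW1, hVW2, hVW3, hVW4, one_mul, zero_mul, mul_zero, add_zero, sub_zero, mul_one] at expand
  rw [← expand]
  abel

theorem mul_mobius_eq {A X D : R}
    (hVW1 : V11 * W11 + V12 * W21 = 1) (hVW2 : V11 * W12 + V12 * W22 = 0)
    (hVW3 : V21 * W11 + V22 * W21 = 0) (hVW4 : V21 * W12 + V22 * W22 = 1)
    (hD : (W21 * X + W22) * D = 1) :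
    (V11 - A * V21) * ((W11 * X + W12) * D) = (X - A) * D + (A * V22 - V12) := by
  rw [← mul_assoc, mul_numerator_eq A X hVW1 hVW2 hVW3 hVW4, add_mul, mul_assoc, hD, mul_one]

theorem mul_inverse_eq_one {A D : R}
    (hVW1 : V11 * W11 + V12 * W21 = 1) (hVW2 : V11 * W12 + V12 * W22 = 0)
    (hVW3 : V21 * W11 + V22 * W21 = 0) (hVW4 : V21 * W12 + V22 * W22 = 1)
    (hD : (W21 * A + W22) * D = 1) :
    (V11 - A * V21) * (W11 - (W11 * A + W12) * D * W21) = 1 := by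
  have hET : (V11 - A * V21) * ((W11 * A + W12) * D) = A * V22 - V12 := by
    rw [mul_mobius_eq hVW1 hVW2 hVW3 hVW4 hD, sub_self, zero_mul, zero_add]
  calc (V11 - A * V21) * (W11 - (W11 * A + W12) * D * W21)
      = (V11 - A * V21) * W11 - (A * V22 - V12) * W21 := by
        rw [mul_sub, ← hET, mul_assoc, mul_assoc, mul_assoc]
    _ = (V11 * W11 + V12 * W21) - A * (V21 * W11 + V22 * W21) := by noncomm_ring
    _ = 1 := by rw [hVW1, hVW3, mul_zero, sub_zero]

theorem inverse_mul_eq_one {A D : R}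
    (hWV1 : W11 * V11 + W12 * V21 = 1) (hWV3 : W21 * V11 + W22 * V21 = 0)
    (hD : D * (W21 * A + W22) = 1) :
    (W11 - (W11 * A + W12) * D * W21) * (V11 - A * V21) = 1 := by
  calc (W11 - (W11 * A + W12) * D * W21) * (V11 - A * V21)
      = (W11 * V11 + W12 * V21) - (W11 * A + W12) * V21
          - (W11 * A + W12) * D * (W21 * V11 + W22 * V21)
          + (W11 * A + W12) * (D * (W21 * A + W22)) * V21 := by noncomm_ring
    _ = 1 := by rw [hWV1, hWV3, hD]; noncomm_ring

theorem mobius_sub_mobius {A B DA DB : R}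
    (hWV1 : W11 * V11 + W12 * V21 = 1) (hWV3 : W21 * V11 + W22 * V21 = 0)
    (hVW1 : V11 * W11 + V12 * W21 = 1) (hVW2 : V11 * W12 + V12 * W22 = 0)
    (hVW3 : V21 * W11 + V22 * W21 = 0) (hVW4 : V21 * W12 + V22 * W22 = 1)
    (hDA1 : (W21 * A + W22) * DA = 1) (hDA2 : DA * (W21 * A + W22) = 1)
    (hDB : (W21 * B + W22) * DB = 1) :
    (W11 * A + W12) * DA - (W11 * B + W12) * DB =
      (W11 - (W11 * A + W12) * DA * W21) * ((A - B) * DB) := by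
  have hE : (V11 - A * V21) * ((W11 * A + W12) * DA - (W11 * B + W12) * DB) =
      (A - B) * DB := by
    rw [mul_sub, mul_mobius_eq hVW1 hVW2 hVW3 hVW4 hDA1,
      mul_mobius_eq hVW1 hVW2 hVW3 hVW4 hDB]
    noncomm_ring
  rw [← hE, ← mul_assoc, inverse_mul_eq_one hWV1 hWV3 hDA2, one_mul]

end MobiusDifference

open MobiusDifference in
theorem stmt16_general (W11 W12 W21 W22 V11 V12 V21 V22 : H →L[ℂ] H)
    -- `V = [[V11, V12], [V21, V22]]` is the (two-sided) inverse of `W`: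
    (hWV1 : W11 ∘L V11 + W12 ∘L V21 = 1)
    (hWV3 : W21 ∘L V11 + W22 ∘L V21 = 0)
    (hVW1 : V11 ∘L W11 + V12 ∘L W21 = 1) (hVW2 : V11 ∘L W12 + V12 ∘L W22 = 0)
    (hVW3 : V21 ∘L W11 + V22 ∘L W21 = 0) (hVW4 : V21 ∘L W12 + V22 ∘L W22 = 1)
    -- so `W̃ = Ĵ W⁻¹ Ĵ` has blocks `W̃₁₁ = V11`, `W̃₁₂ = -V12`, `W̃₂₁ = -V21`, `W̃₂₂ = V22`.
    (A B : H →L[ℂ] H)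
    (DAinv DBinv : H →L[ℂ] H)
    (hDA1 : (W21 ∘L A + W22) ∘L DAinv = 1) (hDA2 : DAinv ∘L (W21 ∘L A + W22) = 1)
    (hDB1 : (W21 ∘L B + W22) ∘L DBinv = 1) :
    -- `W̃₁₁ + A W̃₂₁ = V11 - A ∘ V21` is invertible, and the difference formula holds:
    ∃ Einv : H →L[ℂ] H,
      (V11 - A ∘L V21) ∘L Einv = 1 ∧ Einv ∘L (V11 - A ∘L V21) = 1 ∧
      (W11 ∘L A + W12) ∘L DAinv - (W11 ∘L B + W12) ∘L DBinv =
        Einv ∘L (A - B) ∘L DBinv := by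
  simp only [← ContinuousLinearMap.mul_def] at *
  exact ⟨W11 - (W11 * A + W12) * DAinv * W21,
    mul_inverse_eq_one hVW1 hVW2 hVW3 hVW4 hDA1,
    inverse_mul_eq_one hWV1 hWV3 hDA2,
    mobius_sub_mobius hWV1 hWV3 hVW1 hVW2 hVW3 hVW4 hDA1 hDA2 hDB1⟩

theorem stmt16 (W11 W12 W21 W22 V11 V12 V21 V22 : H →L[ℂ] H)
    -- `W* J W ≤ J` for `J = [[0, -I], [-I, 0]]`, written blockwise:
    (hJ : ∀ x y : H, (inner ℂ x y : ℂ).re ≤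
      (inner ℂ (W11 x + W12 y) (W21 x + W22 y) : ℂ).re)
    -- `V = [[V11, V12], [V21, V22]]` is the (two-sided) inverse of `W`:
    (hWV1 : W11 ∘L V11 + W12 ∘L V21 = 1) (hWV2 : W11 ∘L V12 + W12 ∘L V22 = 0)
    (hWV3 : W21 ∘L V11 + W22 ∘L V21 = 0) (hWV4 : W21 ∘L V12 + W22 ∘L V22 = 1)
    (hVW1 : V11 ∘L W11 + V12 ∘L W21 = 1) (hVW2 : V11 ∘L W12 + V12 ∘L W22 = 0)
    (hVW3 : V21 ∘L W11 + V22 ∘L W21 = 0) (hVW4 : V21 ∘L W12 + V22 ∘L W22 = 1)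
    -- so `W̃ = Ĵ W⁻¹ Ĵ` has blocks `W̃₁₁ = V11`, `W̃₁₂ = -V12`, `W̃₂₁ = -V21`, `W̃₂₂ = V22`.
    (A B : H →L[ℂ] H) (hA : (opRe A).IsPositive) (hB : (opRe B).IsPositive)
    (DAinv DBinv : H →L[ℂ] H)
    (hDA1 : (W21 ∘L A + W22) ∘L DAinv = 1) (hDA2 : DAinv ∘L (W21 ∘L A + W22) = 1)
    (hDB1 : (W21 ∘L B + W22) ∘L DBinv = 1) (hDB2 : DBinv ∘L (W21 ∘L B + W22) = 1) :
    -- `W̃₁₁ + A W̃₂₁ = V11 - A ∘ V21` is invertible, and the difference formula holds: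
    ∃ Einv : H →L[ℂ] H,
      (V11 - A ∘L V21) ∘L Einv = 1 ∧ Einv ∘L (V11 - A ∘L V21) = 1 ∧
      (W11 ∘L A + W12) ∘L DAinv - (W11 ∘L B + W12) ∘L DBinv =
        Einv ∘L (A - B) ∘L DBinv :=
  stmt16_general W11 W12 W21 W22 V11 V12 V21 V22 hWV1 hWV3 hVW1 hVW2 hVW3 hVW4 A B DAinv DBinv hDA1
    hDA2 hDB1
end
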